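/- arXiv:1311.2210 — 7 statements merged into one kernel-verified Lean document; each statement's English description precedes it below -/
import Mathlib

section
/- If G is a connected multigraph in which every vertex has even degree (i.e., G is Eulerian) and the number of edges of G is odd, then G admits no interval t-coloring for any t. -/
open scoped Classical

structure Multigraph (V E : Type) where
  ends : E → Sym2 V
  not_isDiag : ∀ e, ¬ (ends e).IsDiag

namespace Multigraph

variable {V E : Type}

noncomputable def degree [Fintype E] (G : Multigraph V E) (v : V) : ℕ :=
  (Finset.univ.filter (fun e => v ∈ G.ends e)).card

def Proper (G : Multigraph V E) (c : E → ℕ) : Prop :=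
  ∀ e f, e ≠ f → ∀ v, v ∈ G.ends e → v ∈ G.ends f → c e ≠ c f

noncomputable def colorSet [Fintype E] (G : Multigraph V E) (c : E → ℕ) (v : V) : Finset ℕ :=
  (Finset.univ.filter (fun e => v ∈ G.ends e)).image c

def IsIntervalColoring [Fintype E] (G : Multigraph V E) (c : E → ℕ) (t : ℕ) : Prop :=
  G.Proper c ∧ (∀ e, c e ∈ Finset.Icc 1 t) ∧ (∀ i ∈ Finset.Icc 1 t, ∃ e, c e = i) ∧
    ∀ v : V, ∃ a b : ℕ, G.colorSet c v = Finset.Icc a b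

def IntervalColorable [Fintype E] (G : Multigraph V E) : Prop :=
  ∃ t c, G.IsIntervalColoring c t

def Adj (G : Multigraph V E) (v w : V) : Prop := ∃ e, G.ends e = s(v, w)

def Connected (G : Multigraph V E) : Prop :=
  Nonempty V ∧ ∀ v w : V, Relation.ReflTransGen G.Adj v w

noncomputable def maxDegree [Fintype V] [Fintype E] (G : Multigraph V E) : ℕ :=
  Finset.univ.sup G.degree

noncomputable def chromIndex [Fintype E] (G : Multigraph V E) : ℕ :=
  sInf {n | ∃ c : E → ℕ, G.Proper c ∧ ∀ e, c e ∈ Finset.Icc 1 n}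

end Multigraph

namespace MGaux

lemma gauss (a n : ℕ) : (∑ i ∈ Finset.Icc a (a + n), i) * 2 = (n + 1) * (2 * a + n) := by
  induction n with
  | zero => simp [mul_comm]
  | succ n ih =>
      rw [show a + (n + 1) = (a + n) + 1 by ring,
        Finset.sum_Icc_succ_top (by omega) (fun i => i), add_mul, ih]
      ring

end MGaux

/-- a connected multigraph with all degrees even (Eulerian) and an odd
number of edges admits no interval `t`-coloring for any `t`. -/
theorem stmt2 {V E : Type} [Fintype E] (G : Multigraph V E)
    (hconn : G.Connected) (heven : ∀ v : V, Even (G.degree v))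
    (hodd : Odd (Fintype.card E)) :
    ¬ ∃ (t : ℕ) (c : E → ℕ), G.IsIntervalColoring c t := by
  rintro ⟨t, c, hprop, hmem, hsurj, hint⟩
  have hEpos : 0 < Fintype.card E := by rcases hodd with ⟨m, hm⟩; omega
  obtain ⟨e0⟩ : Nonempty E := Fintype.card_pos_iff.mp hEpos
  have hends : ∀ e : E, ∃ x y : V, x ≠ y ∧ G.ends e = s(x, y) := by
    intro e
    have key : ∀ z : Sym2 V, ¬ z.IsDiag → ∃ x y : V, x ≠ y ∧ z = s(x, y) := by
      intro z
      induction z using Sym2.ind with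
      | _ x y => exact fun h => ⟨x, y, fun he => h (by simp [he]), rfl⟩
    exact key _ (G.not_isDiag e)
  have hinc : ∀ v : V, ∃ e : E, v ∈ G.ends e := by
    obtain ⟨x, y, hxy, hxy2⟩ := hends e0
    intro v
    by_cases hv : v = x
    · exact ⟨e0, by rw [hxy2, hv]; simp⟩
    · rcases Relation.ReflTransGen.cases_head (hconn.2 v x) with h | ⟨u, ⟨e, he⟩, _⟩
      · exact absurd h hv
      · exact ⟨e, by rw [he]; simp⟩
  have hfinV : Finite V := by
    have hsub : (Set.univ : Set V) ⊆ ⋃ e : E, {v | v ∈ G.ends e} := fun v _ => by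
      obtain ⟨e, he⟩ := hinc v; exact Set.mem_iUnion.mpr ⟨e, he⟩
    have hfin : (⋃ e : E, {v : V | v ∈ G.ends e}).Finite := by
      apply Set.finite_iUnion
      intro e
      obtain ⟨x, y, -, hxy⟩ := hends e
      have : {v : V | v ∈ G.ends e} = {x, y} := by ext v; simp [hxy, Sym2.mem_iff]
      rw [this]; exact (Set.finite_singleton y).insert x
    exact Set.finite_univ_iff.mp (hfin.subset hsub)
  have : Fintype V := Fintype.ofFinite V
  choose k hk using heven
  have hinjOn : ∀ v : V,
      Set.InjOn c (Finset.univ.filter (fun e => v ∈ G.ends e)) := by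
    intro v e he f hf hcef
    by_contra hne
    exact hprop e f hne v (Finset.mem_filter.mp he).2 (Finset.mem_filter.mp hf).2 hcef
  -- per-vertex parity
  have hkey : ∀ v : V,
      Even ((∑ e ∈ Finset.univ.filter (fun e => v ∈ G.ends e), c e) + k v) := by
    intro v
    obtain ⟨a, b, hab⟩ := hint v
    have hcard : (G.colorSet c v).card = G.degree v :=
      Finset.card_image_of_injOn (hinjOn v)
    have hsum : (∑ e ∈ Finset.univ.filter (fun e => v ∈ G.ends e), c e)
        = ∑ i ∈ G.colorSet c v, i := by
      rw [Multigraph.colorSet, Finset.sum_image (fun x hx y hy h => hinjOn v hx hy h)]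
    rw [hab] at hcard hsum
    rw [Nat.card_Icc] at hcard
    rcases Nat.eq_zero_or_pos (k v) with h0 | hpos
    · have hempty : Finset.Icc a b = ∅ := by
        rw [← Finset.card_eq_zero, Nat.card_Icc]
        have := hk v
        omega
      rw [hsum, hempty, h0]
      simp
    · obtain ⟨k', hkv⟩ : ∃ k', k v = k' + 1 := ⟨k v - 1, by omega⟩
      have hb : b = a + (2 * k' + 1) := by
        have := hk v
        omega
      refine ⟨(k' + 1) * (a + k' + 1), ?_⟩
      rw [hsum, hb, hkv]
      have hg := MGaux.gauss a (2 * k' + 1)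
      refine Nat.eq_of_mul_eq_mul_right two_pos ?_
      rw [add_mul, hg]
      ring
  -- double counting
  have hdc : ∀ w : E → ℕ,
      (∑ v : V, ∑ e ∈ Finset.univ.filter (fun e => v ∈ G.ends e), w e)
        = ∑ e : E, 2 * w e := by
    intro w
    have h2 : ∀ e : E, (Finset.univ.filter (fun v => v ∈ G.ends e)).card = 2 := by
      intro e
      obtain ⟨x, y, hne, hxy⟩ := hends e
      have hset : Finset.univ.filter (fun v => v ∈ G.ends e) = {x, y} := by
        ext v; simp [hxy, Sym2.mem_iff]
      rw [hset, Finset.card_insert_of_notMem (by simp [hne]), Finset.card_singleton]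
    calc (∑ v : V, ∑ e ∈ Finset.univ.filter (fun e => v ∈ G.ends e), w e)
        = ∑ v : V, ∑ e : E, if v ∈ G.ends e then w e else 0 := by
          simp [Finset.sum_filter]
      _ = ∑ e : E, ∑ v : V, if v ∈ G.ends e then w e else 0 := Finset.sum_comm
      _ = ∑ e : E, 2 * w e := by
          refine Finset.sum_congr rfl fun e _ => ?_
          rw [← Finset.sum_filter, Finset.sum_const, h2 e, smul_eq_mul]
  have hSsum : (∑ v : V, ∑ e ∈ Finset.univ.filter (fun e => v ∈ G.ends e), c e)
      = ∑ e : E, 2 * c e := hdc c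
  have hdeg : (∑ v : V, G.degree v) = 2 * Fintype.card E := by
    calc (∑ v : V, G.degree v)
        = ∑ v : V, ∑ e ∈ Finset.univ.filter (fun e => v ∈ G.ends e), (1 : ℕ) := by
          refine Finset.sum_congr rfl fun v _ => ?_
          rw [Multigraph.degree, Finset.card_eq_sum_ones]
      _ = ∑ e : E, 2 * 1 := hdc (fun _ => 1)
      _ = 2 * Fintype.card E := by simp [mul_comm]
  have hEvenTot : Even (∑ v : V,
      ((∑ e ∈ Finset.univ.filter (fun e => v ∈ G.ends e), c e) + k v)) :=
    Finset.even_sum _ fun v _ => hkey v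
  rw [Finset.sum_add_distrib, hSsum] at hEvenTot
  have h1 : Even (∑ e : E, 2 * c e) :=
    even_iff_two_dvd.mpr (Finset.dvd_sum fun e _ => dvd_mul_right 2 (c e))
  have hk2 : Even (∑ v : V, k v) := (Nat.even_add.mp hEvenTot).mp h1
  have hkE : (∑ v : V, k v) = Fintype.card E := by
    have h2 : 2 * (∑ v : V, k v) = 2 * Fintype.card E := by
      rw [← hdeg, Finset.mul_sum]
      exact Finset.sum_congr rfl fun v _ => by rw [hk v, two_mul]
    omega
  rw [hkE] at hk2
  exact (Nat.not_odd_iff_even.mpr hk2) hodd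
end

section
/- If G is an Eulerian multigraph that admits an interval coloring, then |E(G)| is even. -/
open scoped Classical

lemma odd_range_card (n : ℕ) :
    ((Finset.range n).filter (fun k => Odd k)).card = n / 2 := by
  induction n with
  | zero => simp
  | succ n ih =>
    rw [Finset.range_add_one, Finset.filter_insert]
    by_cases h : Odd n
    · rw [if_pos h, Finset.card_insert_of_notMem (by simp)]
      rw [Nat.odd_iff] at h
      omega
    · rw [if_neg h]
      rw [Nat.not_odd_iff] at h
      omega

lemma odd_Icc_card (a b : ℕ) :
    ((Finset.Icc a b).filter (fun k => Odd k)).card = (b + 1) / 2 - a / 2 := by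
  rcases le_or_gt a (b + 1) with h | h
  · have heq : (Finset.Icc a b).filter (fun k => Odd k)
        = (Finset.range (b + 1)).filter (fun k => Odd k)
          \ (Finset.range a).filter (fun k => Odd k) := by
      ext x
      simp only [Finset.mem_filter, Finset.mem_sdiff, Finset.mem_Icc, Finset.mem_range,
        Nat.odd_iff]
      omega
    rw [heq, Finset.card_sdiff_of_subset
      (Finset.filter_subset_filter _ (Finset.range_subset_range.2 h)),
      odd_range_card, odd_range_card]
  · rw [Finset.Icc_eq_empty (by omega)]
    simp only [Finset.filter_empty, Finset.card_empty]
    omega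

lemma double_count {V E : Type} [Fintype E] (G : Multigraph V E)
    (S : Finset V) (hS : ∀ e : E, ∀ x ∈ G.ends e, x ∈ S) (T : Finset E) :
    ∑ v ∈ S, (T.filter (fun e => v ∈ G.ends e)).card = 2 * T.card := by
  have h1 : ∀ v : V, (T.filter (fun e => v ∈ G.ends e)).card
      = ∑ e ∈ T, if v ∈ G.ends e then 1 else 0 := fun v => Finset.card_filter _ _
  simp_rw [h1]
  rw [Finset.sum_comm]
  have h2 : ∀ e ∈ T, (∑ v ∈ S, if v ∈ G.ends e then 1 else 0) = 2 := by
    intro e _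
    rw [← Finset.card_filter]
    have hex : ∃ x y : V, G.ends e = s(x, y) := by
      induction G.ends e using Sym2.ind with
      | _ x y => exact ⟨x, y, rfl⟩
    obtain ⟨x, y, hQ⟩ := hex
    have hxy : x ≠ y := by
      have := G.not_isDiag e
      rw [hQ] at this
      simpa using this
    have hfe : S.filter (fun v => v ∈ G.ends e) = {x, y} := by
      ext z
      simp only [Finset.mem_filter, Finset.mem_insert, Finset.mem_singleton, hQ,
        Sym2.mem_iff]
      constructor
      · rintro ⟨_, h⟩; exact h
      · rintro (rfl | rfl)
        · exact ⟨hS e z (by rw [hQ]; simp), Or.inl rfl⟩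
        · exact ⟨hS e z (by rw [hQ]; simp), Or.inr rfl⟩
    rw [hfe, Finset.card_insert_of_notMem (by simp [hxy]), Finset.card_singleton]
  rw [Finset.sum_congr rfl h2, Finset.sum_const, smul_eq_mul, mul_comm]

/-- an Eulerian (connected, all degrees even) multigraph that admits an
interval coloring has an even number of edges. -/
theorem stmt4 {V E : Type} [Fintype E] (G : Multigraph V E)
    (hconn : G.Connected) (heven : ∀ v : V, Even (G.degree v))
    (hcol : G.IntervalColorable) :
    Even (Fintype.card E) := by
  classical
  obtain ⟨t, c, hproper, hmem, hsurj, hint⟩ := hcol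
  -- endpoint functions
  have hex : ∀ e : E, ∃ p : V × V, G.ends e = s(p.1, p.2) := by
    intro e
    induction G.ends e using Sym2.ind with
    | _ x y => exact ⟨(x, y), rfl⟩
  choose p hp using hex
  set S : Finset V :=
    Finset.univ.image (fun e : E => (p e).1) ∪ Finset.univ.image (fun e : E => (p e).2)
    with hSdef
  have hS : ∀ e : E, ∀ x ∈ G.ends e, x ∈ S := by
    intro e x hx
    rw [hp e, Sym2.mem_iff] at hx
    rcases hx with rfl | rfl
    · exact Finset.mem_union_left _ (Finset.mem_image_of_mem _ (Finset.mem_univ e))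
    · exact Finset.mem_union_right _ (Finset.mem_image_of_mem _ (Finset.mem_univ e))
  set O : Finset E := Finset.univ.filter (fun e => Odd (c e)) with hO
  have hdc1 := double_count G S hS Finset.univ
  have hdc2 := double_count G S hS O
  have hvert : ∀ v : V, (Finset.univ.filter (fun e : E => v ∈ G.ends e)).card
      = 2 * (O.filter (fun e => v ∈ G.ends e)).card := by
    intro v
    set Fv := Finset.univ.filter (fun e : E => v ∈ G.ends e) with hFv
    have hinj : Set.InjOn c ↑Fv := by
      intro e he f hf hef
      by_contra hne
      exact hproper e f hne v
        (by simpa [hFv] using he) (by simpa [hFv] using hf) hef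
    obtain ⟨a, b, hab⟩ := hint v
    have himg : Fv.image c = Finset.Icc a b := hab
    have hdeg : Fv.card = b + 1 - a := by
      rw [← Finset.card_image_of_injOn hinj, himg, Nat.card_Icc]
    have hoddeq : (Fv.filter (fun e => Odd (c e))).card
        = ((Finset.Icc a b).filter (fun k => Odd k)).card := by
      rw [← himg, Finset.filter_image,
        Finset.card_image_of_injOn
          (hinj.mono (Finset.coe_subset.mpr (Finset.filter_subset _ _)))]
    have hOv : O.filter (fun e => v ∈ G.ends e) = Fv.filter (fun e => Odd (c e)) := by
      simp only [hO, hFv, Finset.filter_filter]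
      exact Finset.filter_congr fun e _ => and_comm
    have hev : Even Fv.card := heven v
    rw [hOv, hoddeq, odd_Icc_card]
    rw [Nat.even_iff, hdeg] at hev
    omega
  have hsum : ∑ v ∈ S, (Finset.univ.filter (fun e : E => v ∈ G.ends e)).card
      = 2 * ∑ v ∈ S, (O.filter (fun e => v ∈ G.ends e)).card := by
    rw [Finset.mul_sum]
    exact Finset.sum_congr rfl fun v _ => hvert v
  rw [hdc1, hdc2] at hsum
  rw [← Finset.card_univ, Nat.even_iff]
  omega
end

section
/- If G is an Eulerian multigraph that admits an interval coloring, then for every edge e of G, the multigraph G_e obtained from G by subdividing the edge e admits no interval coloring. -/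
open scoped Classical

namespace Multigraph

variable {V E : Type}

/-- The multigraph obtained by subdividing the edge `e` (with endpoints `x` and `y`). -/
def subdivide (G : Multigraph V E) (e : E) (x y : V) :
    Multigraph (V ⊕ Unit) ({f : E // f ≠ e} ⊕ Bool) where
  ends := fun f => match f with
    | Sum.inl f => (G.ends f.1).map Sum.inl
    | Sum.inr true => s(Sum.inl x, Sum.inr ())
    | Sum.inr false => s(Sum.inl y, Sum.inr ())
  not_isDiag := by
    rintro (⟨f, hf⟩ | b)
    · exact fun h => G.not_isDiag f ((Sym2.isDiag_map Sum.inl_injective).mp h)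
    · cases b <;> simp

/-- The multigraph `G*`: a new vertex joined to every vertex of odd degree. -/
def addOddVertex [Fintype E] (G : Multigraph V E) :
    Multigraph (V ⊕ Unit) (E ⊕ {v : V // Odd (G.degree v)}) where
  ends := fun f => match f with
    | Sum.inl e => (G.ends e).map Sum.inl
    | Sum.inr v => s(Sum.inl v.1, Sum.inr ())
  not_isDiag := by
    rintro (e | v)
    · exact fun h => G.not_isDiag e ((Sym2.isDiag_map Sum.inl_injective).mp h)
    · simp

/-- The edge "names" of the line graph of `G`. -/
def LineEdges (G : Multigraph V E) : Type :=
  {p : Sym2 E // ¬p.IsDiag ∧ ∃ v : V, ∀ f, f ∈ p → v ∈ G.ends f}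

noncomputable instance [Finite E] (G : Multigraph V E) : Fintype G.LineEdges := by
  unfold Multigraph.LineEdges; exact Fintype.ofFinite _

/-- The line graph of `G`, as a multigraph on vertex set `E`. -/
def lineGraph (G : Multigraph V E) : Multigraph E G.LineEdges where
  ends := fun p => p.1
  not_isDiag := fun p => p.2.1

end Multigraph


/-!
In an interval colouring, a vertex of even degree sees an interval of colours of even length,
so exactly half of its edges have odd colours. Double counting over all vertices then shows that
an interval-colourable multigraph with all degrees even has twice as many edges as odd-coloured
edges. Subdividing an edge keeps every degree even and adds one edge, so `G` and `G_e` cannot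
both have an even number of edges.
-/

open Finset

theorem Nat.card_filter_odd_Ico_add_two_mul (a k : ℕ) : #{n ∈ Ico a (a + 2 * k) | Odd n} = k := by
  induction k with
  | zero => simp
  | succ k ih =>
    rw [show a + 2 * (k + 1) = (a + 2 * k + 1) + 1 by ring,
      Nat.Ico_succ_right_eq_insert_Ico (by omega), Nat.Ico_succ_right_eq_insert_Ico (by omega),
      filter_insert, filter_insert]
    rcases Nat.even_or_odd (a + 2 * k) with h | h
    · have h' : Odd (a + 2 * k + 1) := h.add_one
      simp [h', Nat.not_odd_iff_even.mpr h, ih]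
    · have h' : ¬ Odd (a + 2 * k + 1) := Nat.not_odd_iff_even.mpr h.add_one
      simp [h, h', ih]

theorem Nat.two_mul_card_filter_odd_Icc {a b : ℕ} (h : Even #(Icc a b)) :
    2 * #{n ∈ Icc a b | Odd n} = #(Icc a b) := by
  obtain ⟨k, hk⟩ := h
  have hIcc : Icc a b = Ico a (a + 2 * k) := by
    ext n; simp only [mem_Icc, mem_Ico]; rw [Nat.card_Icc] at hk; omega
  rw [hIcc, Nat.card_filter_odd_Ico_add_two_mul, Nat.card_Ico]
  omega

namespace Multigraph

variable {V E : Type} [Fintype E]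

lemma degree_eq_sum (G : Multigraph V E) (v : V) :
    G.degree v = ∑ f, if v ∈ G.ends f then 1 else 0 :=
  card_filter _ _

noncomputable def vertexSupport (G : Multigraph V E) : Finset V :=
  univ.biUnion fun f => (G.ends f).toFinset

lemma sum_vertexSupport_card_filter_mem_ends (G : Multigraph V E) (T : Finset E) :
    ∑ v ∈ G.vertexSupport, #{f ∈ T | v ∈ G.ends f} = 2 * #T := by
  have hends : ∀ f, {v ∈ G.vertexSupport | v ∈ G.ends f} = (G.ends f).toFinset := fun f => by
    ext v
    simp only [vertexSupport, mem_filter, mem_biUnion, mem_univ, true_and, Sym2.mem_toFinset]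
    exact ⟨And.right, fun hv => ⟨⟨f, hv⟩, hv⟩⟩
  have := sum_card_bipartiteAbove_eq_sum_card_bipartiteBelow (s := G.vertexSupport) (t := T)
    (r := fun v f => v ∈ G.ends f)
  simp only [bipartiteAbove, bipartiteBelow, hends,
    Sym2.card_toFinset_of_not_isDiag _ (G.not_isDiag _), sum_const, smul_eq_mul] at this
  rw [this, mul_comm]

lemma IsIntervalColoring.two_mul_card_odd_incident {G : Multigraph V E} {c : E → ℕ} {t : ℕ}
    (hc : G.IsIntervalColoring c t) {v : V} (hv : Even (G.degree v)) :
    2 * #{f | v ∈ G.ends f ∧ Odd (c f)} = G.degree v := by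
  obtain ⟨hproper, -, -, hinterval⟩ := hc
  obtain ⟨a, b, hab⟩ := hinterval v
  have hinj : Set.InjOn c {f | v ∈ G.ends f} := fun f hf g hg hfg => by
    by_contra hne
    exact hproper f g hne v hf hg hfg
  have hdeg : #(Icc a b) = G.degree v := by
    rw [← hab, colorSet, card_image_of_injOn (by simpa using hinj), degree]
  have hodd : #{f | v ∈ G.ends f ∧ Odd (c f)} = #{n ∈ Icc a b | Odd n} := by
    rw [← hab, colorSet, filter_image, card_image_of_injOn, filter_filter]
    exact hinj.mono fun f hf => by simp_all
  rw [hodd, Nat.two_mul_card_filter_odd_Icc (hdeg ▸ hv), hdeg]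

theorem even_card_of_intervalColorable (G : Multigraph V E)
    (heven : ∀ v, Even (G.degree v)) (hcol : G.IntervalColorable) :
    Even (Fintype.card E) := by
  obtain ⟨t, c, hc⟩ := hcol
  have hall := G.sum_vertexSupport_card_filter_mem_ends univ
  have hodd := G.sum_vertexSupport_card_filter_mem_ends {f | Odd (c f)}
  have hsplit : ∀ v, #{f ∈ univ | v ∈ G.ends f} = 2 * #{f ∈ {f | Odd (c f)} | v ∈ G.ends f} :=
    fun v => by
      rw [filter_filter, ← degree, ← hc.two_mul_card_odd_incident (heven v)]
      simp only [and_comm]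
  simp only [hsplit, ← mul_sum, hodd, card_univ] at hall
  exact ⟨#{f | Odd (c f)}, by omega⟩

section Subdivide

variable (G : Multigraph V E) {e : E} {x y : V}

lemma degree_subdivide_inl (hxy : G.ends e = s(x, y)) (v : V) :
    (G.subdivide e x y).degree (Sum.inl v) = G.degree v := by
  have hne : x ≠ y := fun h => G.not_isDiag e (by simp [hxy, h])
  rw [degree_eq_sum, degree_eq_sum, Fintype.sum_sum_type, Fintype.sum_bool,
    Fintype.sum_eq_add_sum_subtype_ne _ e, hxy]
  by_cases hx : v = x <;> by_cases hy : v = y <;> simp_all [subdivide, add_comm]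

lemma degree_subdivide_inr (e : E) (x y : V) : (G.subdivide e x y).degree (Sum.inr ()) = 2 := by
  simp [degree_eq_sum, Fintype.sum_sum_type, subdivide]

end Subdivide

end Multigraph

theorem stmt6_general {V E : Type} [Fintype E] (G : Multigraph V E)
    (heven : ∀ v : V, Even (G.degree v))
    (hcol : G.IntervalColorable) (e : E) (x y : V) (hxy : G.ends e = s(x, y)) :
    ¬ (G.subdivide e x y).IntervalColorable := by
  intro hcol'
  have heven' : ∀ v, Even ((G.subdivide e x y).degree v) := by
    rintro (v | ⟨⟩)
    · exact G.degree_subdivide_inl hxy v ▸ heven v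
    · exact G.degree_subdivide_inr e x y ▸ even_two
  have hcard : Fintype.card ({f : E // f ≠ e} ⊕ Bool) = Fintype.card E + 1 := by
    rw [Fintype.card_sum, Fintype.card_bool, Fintype.card_subtype_compl, Fintype.card_subtype_eq]
    have hpos := Fintype.card_pos_iff.mpr ⟨e⟩
    omega
  have heven_succ := (G.subdivide e x y).even_card_of_intervalColorable heven' hcol'
  rw [hcard, Nat.even_add_one] at heven_succ
  exact heven_succ (G.even_card_of_intervalColorable heven hcol)

/-- if `G` is Eulerian and interval colorable, then subdividing any edge
yields a multigraph with no interval coloring. -/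
theorem stmt6 {V E : Type} [Fintype E] (G : Multigraph V E)
    (hconn : G.Connected) (heven : ∀ v : V, Even (G.degree v))
    (hcol : G.IntervalColorable) (e : E) (x y : V) (hxy : G.ends e = s(x, y)) :
    ¬ (G.subdivide e x y).IntervalColorable :=
  stmt6_general G heven hcol e x y hxy
end

section
/- Let G be a connected multigraph with an odd number of edges, and let G* be obtained from G by adding a new vertex u joined by an edge to every vertex of G of odd degree. If G admits an interval coloring, then G* admits no interval coloring. -/
open scoped Classical

/-!
In an interval coloring, a vertex of even degree `2k` sees `k` odd colours, one from each pair
of consecutive colours. Summing over the vertices counts every odd-coloured edge twice, so the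
number of edges equals twice the number of odd-coloured edges and is even. In `G*` every degree is
even (the new vertex has even degree by the handshake lemma), while `|E(G*)| = |E(G)| + #odd-degree
vertices` is odd.
-/

open Finset

namespace Nat

theorem card_filter_odd_Ico_add_two_mul_s8 (a k : ℕ) : #{i ∈ Ico a (a + 2 * k) | Odd i} = k := by
  induction k with
  | zero => simp
  | succ k ih =>
    rw [show a + 2 * (k + 1) = a + 2 * k + 1 + 1 by ring, Nat.Ico_succ_right_eq_insert_Ico (by omega),
      Nat.Ico_succ_right_eq_insert_Ico (by omega), filter_insert, filter_insert]
    rcases Nat.even_or_odd (a + 2 * k) with h | h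
    · simp [h.add_one, Nat.not_odd_iff_even.mpr h, ih]
    · simp [h, Nat.not_odd_iff_even.mpr h.add_one, ih]

theorem two_mul_card_filter_odd_Icc_s8 {a b : ℕ} (h : Even #(Icc a b)) :
    2 * #{i ∈ Icc a b | Odd i} = #(Icc a b) := by
  obtain ⟨k, hk⟩ := h
  rw [Nat.card_Icc] at hk
  have hIcc : Icc a b = Ico a (a + 2 * k) := by
    rw [← Ico_add_one_right_eq_Icc]
    rcases le_or_gt a (b + 1) with hab | hab
    · congr 1; omega
    · rw [Ico_eq_empty (by omega), Ico_eq_empty (by omega)]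
  rw [hIcc, card_filter_odd_Ico_add_two_mul_s8, Nat.card_Ico]
  omega

end Nat

namespace Multigraph

variable {V E : Type} (G : Multigraph V E)

theorem card_filter_mem_ends [Fintype V] (e : E) : #{v | v ∈ G.ends e} = 2 := by
  rw [← Sym2.card_toFinset_of_not_isDiag _ (G.not_isDiag e)]
  congr 1
  ext v
  simp [Sym2.mem_toFinset]

theorem sum_card_filter_mem_ends [Fintype V] (s : Finset E) :
    ∑ v, #{e ∈ s | v ∈ G.ends e} = 2 * #s := by
  have := sum_card_bipartiteAbove_eq_sum_card_bipartiteBelow (s := univ) (t := s)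
    (fun v e => v ∈ G.ends e)
  simp only [bipartiteAbove, bipartiteBelow, card_filter_mem_ends] at this
  rw [this, sum_const, smul_eq_mul, mul_comm]

variable [Fintype E]

theorem sum_degree [Fintype V] : ∑ v, G.degree v = 2 * Fintype.card E :=
  G.sum_card_filter_mem_ends univ

theorem even_card_filter_odd_degree [Fintype V] : Even #{v | Odd (G.degree v)} :=
  (even_sum_iff_even_card_odd _).mp (G.sum_degree ▸ even_two_mul _)

variable {G} {c : E → ℕ}

theorem Proper.card_colorSet (hc : G.Proper c) (v : V) : #(G.colorSet c v) = G.degree v :=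
  card_image_of_injOn fun e he f hf hef => by_contra fun hne =>
    hc e f hne v (mem_filter.mp he).2 (mem_filter.mp hf).2 hef

theorem Proper.card_filter_odd_colorSet (hc : G.Proper c) (v : V) :
    #{i ∈ G.colorSet c v | Odd i} = #{e ∈ {e | Odd (c e)} | v ∈ G.ends e} := by
  rw [colorSet, filter_image, card_image_of_injOn]
  · congr 1; ext e; simp [and_comm]
  · intro e he f hf hef
    simp only [coe_filter, mem_filter, mem_univ, true_and, Set.mem_ofPred_eq] at he hf
    by_contra hne
    exact hc e f hne v he.1 hf.1 hef

theorem IsIntervalColoring.even_card_of_even_degree [Fintype V] {t : ℕ}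
    (hc : G.IsIntervalColoring c t) (hdeg : ∀ v, Even (G.degree v)) :
    Even (Fintype.card E) := by
  obtain ⟨hproper, -, -, hinterval⟩ := hc
  have hv : ∀ v, 2 * #{e ∈ {e | Odd (c e)} | v ∈ G.ends e} = G.degree v := fun v => by
    obtain ⟨a, b, hab⟩ := hinterval v
    have hcard := hproper.card_colorSet v
    rw [← hproper.card_filter_odd_colorSet, ← hcard, hab]
    exact Nat.two_mul_card_filter_odd_Icc_s8 (hab ▸ hcard ▸ hdeg v)
  have htwice : 2 * Fintype.card E = 2 * (2 * #{e | Odd (c e)}) := by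
    rw [← G.sum_degree, ← G.sum_card_filter_mem_ends, mul_sum]
    exact sum_congr rfl fun v _ => (hv v).symm
  exact ⟨#{e | Odd (c e)}, by omega⟩

theorem not_intervalColorable_of_even_degree [Fintype V] (hdeg : ∀ v, Even (G.degree v))
    (hodd : Odd (Fintype.card E)) : ¬ G.IntervalColorable := fun ⟨_, _, hc⟩ =>
  Nat.not_even_iff_odd.mpr hodd (hc.even_card_of_even_degree hdeg)

variable (G)

@[simp]
theorem addOddVertex_ends_inl (e : E) :
    G.addOddVertex.ends (.inl e) = (G.ends e).map Sum.inl := rfl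

@[simp]
theorem addOddVertex_ends_inr (v : {v : V // Odd (G.degree v)}) :
    G.addOddVertex.ends (.inr v) = s(.inl v.1, .inr ()) := rfl

theorem degree_addOddVertex_inl [Fintype V] (v : V) :
    G.addOddVertex.degree (.inl v) = G.degree v + if Odd (G.degree v) then 1 else 0 := by
  rw [degree.eq_1 (G := G.addOddVertex), card_filter, Fintype.sum_sum_type]
  simp only [addOddVertex_ends_inl, Sym2.mem_map, Sum.inl.injEq, exists_eq_right, sum_boole,
    Nat.cast_id, addOddVertex_ends_inr, Sym2.mem_iff, reduceCtorEq, or_false]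
  congr 1
  split_ifs with h
  · exact card_eq_one.mpr ⟨⟨v, h⟩, by ext; simp [Subtype.ext_iff, eq_comm]⟩
  · exact card_eq_zero.mpr (filter_eq_empty_iff.mpr fun w _ hw => h (hw ▸ w.2))

theorem degree_addOddVertex_inr [Fintype V] :
    G.addOddVertex.degree (.inr ()) = #{v | Odd (G.degree v)} := by
  rw [degree.eq_1 (G := G.addOddVertex), card_filter, Fintype.sum_sum_type]
  simp [Sym2.mem_map, Fintype.card_subtype]

theorem even_degree_addOddVertex [Fintype V] (w : V ⊕ Unit) :
    Even (G.addOddVertex.degree w) := by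
  rcases w with v | ⟨⟩
  · rw [degree_addOddVertex_inl]
    split_ifs with h
    · exact h.add_one
    · simpa using Nat.not_odd_iff_even.mp h
  · rw [degree_addOddVertex_inr]
    exact G.even_card_filter_odd_degree

theorem odd_card_edges_addOddVertex [Fintype V] (hodd : Odd (Fintype.card E)) :
    Odd (Fintype.card (E ⊕ {v : V // Odd (G.degree v)})) := by
  rw [Fintype.card_sum, Fintype.card_subtype]
  exact hodd.add_even G.even_card_filter_odd_degree

end Multigraph

theorem stmt8_general {V E : Type} [Fintype V] [Fintype E] (G : Multigraph V E)
    (hodd : Odd (Fintype.card E)) :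
    ¬ G.addOddVertex.IntervalColorable :=
  G.addOddVertex.not_intervalColorable_of_even_degree G.even_degree_addOddVertex
    (G.odd_card_edges_addOddVertex hodd)

/-- if `G` is connected with an odd number of edges and is interval colorable,
then `G*` (a new vertex joined to every odd-degree vertex) has no interval coloring. -/
theorem stmt8 {V E : Type} [Fintype V] [Fintype E] (G : Multigraph V E)
    (hconn : G.Connected) (hodd : Odd (Fintype.card E))
    (hcol : G.IntervalColorable) :
    ¬ G.addOddVertex.IntervalColorable :=
  stmt8_general G hodd
end

section
/- If a multigraph G admits an interval t-coloring, then χ'(G) = Δ(G), i.e., G has a proper edge-coloring with Δ(G) colors. -/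
open scoped Classical

theorem card_colorSet_aux {V E : Type} [Fintype E] (G : Multigraph V E) (c : E → ℕ)
    (hp : G.Proper c) (v : V) : (G.colorSet c v).card = G.degree v := by
  unfold Multigraph.colorSet Multigraph.degree
  apply Finset.card_image_of_injOn
  intro e he f hf hef
  by_contra hne
  exact hp e f hne v (Finset.mem_filter.mp he).2 (Finset.mem_filter.mp hf).2 hef

/-- Asratian–Kamalian: a multigraph with an interval `t`-coloring
satisfies `χ'(G) = Δ(G)`. -/
theorem stmt11 {V E : Type} [Fintype V] [Fintype E] (G : Multigraph V E)
    (c : E → ℕ) (t : ℕ) (hc : G.IsIntervalColoring c t) :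
    G.chromIndex = G.maxDegree := by
  obtain ⟨hp, hmem, hsurj, hint⟩ := hc
  set Δ := G.maxDegree with hΔ
  set S := {n | ∃ c' : E → ℕ, G.Proper c' ∧ ∀ e, c' e ∈ Finset.Icc 1 n} with hS
  have hdegle : ∀ v, G.degree v ≤ Δ := fun v => Finset.le_sup (Finset.mem_univ v)
  have hlow : ∀ n ∈ S, Δ ≤ n := by
    rintro n ⟨c', hp', hm'⟩
    refine Finset.sup_le fun v _ => ?_
    calc G.degree v = (G.colorSet c' v).card := (card_colorSet_aux G c' hp' v).symm
      _ ≤ (Finset.Icc 1 n).card := Finset.card_le_card (by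
            intro i hi
            obtain ⟨e, he, rfl⟩ := Finset.mem_image.mp hi
            exact hm' e)
      _ = n := by simp
  have hΔmem : Δ ∈ S := by
    by_cases hE : Nonempty E
    · obtain ⟨e0⟩ := hE
      have hΔpos : 0 < Δ := by
        have hv0 : (G.ends e0).out.1 ∈ G.ends e0 := Sym2.out_fst_mem _
        have : 1 ≤ G.degree (G.ends e0).out.1 := by
          refine Finset.card_pos.mpr ⟨e0, ?_⟩
          simp [hv0]
        exact lt_of_lt_of_le this (hdegle _)
      refine ⟨fun e => (c e - 1) % Δ + 1, ?_, ?_⟩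
      · intro e f hne v hev hfv heq
        have hne' : c e ≠ c f := hp e f hne v hev hfv
        obtain ⟨a, b, hab⟩ := hint v
        have hce : c e ∈ Finset.Icc a b := by
          rw [← hab]
          exact Finset.mem_image.mpr ⟨e, by simp [hev], rfl⟩
        have hcf : c f ∈ Finset.Icc a b := by
          rw [← hab]
          exact Finset.mem_image.mpr ⟨f, by simp [hfv], rfl⟩
        have hdeg : G.degree v = b + 1 - a := by
          rw [← card_colorSet_aux G c hp v, hab, Nat.card_Icc]
        have hab' : a ≤ b := le_trans (Finset.mem_Icc.mp hce).1 (Finset.mem_Icc.mp hce).2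
        have hba : b - a < Δ := by
          have h1 : b + 1 - a ≤ Δ := hdeg ▸ hdegle v
          omega
        have hmod : (c e - 1) % Δ = (c f - 1) % Δ := by simpa using heq
        have key : ∀ x y : ℕ, x ∈ Finset.Icc a b → y ∈ Finset.Icc a b → 1 ≤ x →
            x < y → (x - 1) % Δ = (y - 1) % Δ → False := by
          intro x y hx hy hx1 hxy hm
          have hdvd : Δ ∣ (y - 1) - (x - 1) :=
            (Nat.modEq_iff_dvd' (by omega)).mp hm
          have hle : Δ ≤ (y - 1) - (x - 1) := Nat.le_of_dvd (by omega) hdvd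
          rw [Finset.mem_Icc] at hx hy
          omega
        have he1 : 1 ≤ c e := (Finset.mem_Icc.mp (hmem e)).1
        have hf1 : 1 ≤ c f := (Finset.mem_Icc.mp (hmem f)).1
        rcases Nat.lt_or_ge (c e) (c f) with h | h
        · exact key _ _ hce hcf he1 h hmod
        · exact key _ _ hcf hce hf1 (lt_of_le_of_ne h (Ne.symm hne')) hmod.symm
      · intro e
        rw [Finset.mem_Icc]
        exact ⟨Nat.le_add_left 1 _, Nat.succ_le_of_lt (Nat.mod_lt _ hΔpos)⟩
    · have hΔ0 : Δ = 0 := by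
        refine Nat.le_zero.mp (Finset.sup_le fun v _ => ?_)
        have h0 : (Finset.univ.filter (fun e => v ∈ G.ends e)) = ∅ :=
          Finset.eq_empty_of_forall_notMem fun e _ => hE ⟨e⟩
        simp [Multigraph.degree, h0]
      exact ⟨fun e => (hE ⟨e⟩).elim, fun e f _ _ _ _ => (hE ⟨e⟩).elim,
        fun e => (hE ⟨e⟩).elim⟩
  exact le_antisymm (Nat.sInf_le hΔmem) (hlow _ (Nat.sInf_mem ⟨Δ, hΔmem⟩))
end

section
/- A connected multigraph with at least one edge in which every vertex has even degree and which has exactly an odd number of edges cannot have a proper edge-coloring by colors 1,...,t in which every vertex's incident color set is an integer interval, even if not all colors in {1,...,t} are required to be used. -/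
open scoped Classical

lemma oddcount (a b : ℕ) :
    ((Finset.Icc a b).filter (fun x => Odd x)).card = (b+1)/2 - a/2 := by
  induction b with
  | zero =>
    rcases Nat.eq_zero_or_pos a with h|h
    · subst h; decide
    · rw [Finset.Icc_eq_empty (by omega)]
      simp only [Finset.filter_empty, Finset.card_empty]; omega
  | succ b ih =>
    rcases le_or_gt a (b+1) with h|h
    · rw [← Finset.insert_Icc_right_eq_Icc_add_one h, Finset.filter_insert]
      by_cases hb : Odd (b+1)
      · rw [if_pos hb, Finset.card_insert_of_notMem (by simp), ih]
        rw [Nat.odd_iff] at hb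
        omega
      · rw [if_neg hb, ih]
        rw [Nat.odd_iff] at hb
        omega
    · rw [Finset.Icc_eq_empty (by omega)]
      simp only [Finset.filter_empty, Finset.card_empty]; omega

lemma oddeven (a b : ℕ) (h : Even ((Finset.Icc a b).card)) :
    ((Finset.Icc a b).filter (fun x => Odd x)).card
      = ((Finset.Icc a b).filter (fun x => ¬ Odd x)).card := by
  have h1 := oddcount a b
  have h2 := Finset.card_filter_add_card_filter_not
    (s := Finset.Icc a b) (p := fun x => Odd x)
  have h3 : (Finset.Icc a b).card = b + 1 - a := Nat.card_Icc a b
  rw [Nat.even_iff] at h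
  omega

/-- a connected multigraph with at least one edge, all degrees even and an
odd number of edges has no proper edge-coloring by colors `1,...,t` in which every
vertex's incident color set is an integer interval (the "all colors used" condition is
not needed). -/
theorem stmt16 {V E : Type} [Fintype E] (G : Multigraph V E) [Nonempty E]
    (hconn : G.Connected) (heven : ∀ v : V, Even (G.degree v))
    (hodd : Odd (Fintype.card E)) :
    ¬ ∃ (t : ℕ) (c : E → ℕ), G.Proper c ∧ (∀ e, c e ∈ Finset.Icc 1 t) ∧
        ∀ v : V, ∃ a b : ℕ, G.colorSet c v = Finset.Icc a b := by
  classical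
  rintro ⟨t, c, hprop, hc, hint⟩
  -- choose representatives of the endpoints of each edge
  have hrep : ∀ e, ∃ q : V × V, G.ends e = s(q.1, q.2) := fun e =>
    Sym2.inductionOn (f := fun s => ∃ q : V × V, s = s(q.1, q.2)) (G.ends e)
      (fun x y => ⟨(x, y), rfl⟩)
  choose p hp using hrep
  have hne : ∀ e, (p e).1 ≠ (p e).2 := by
    intro e h
    exact G.not_isDiag e (by rw [hp e]; exact Sym2.mk_isDiag_iff.mpr h)
  have hmem : ∀ e v, v ∈ G.ends e ↔ v = (p e).1 ∨ v = (p e).2 := by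
    intro e v; rw [hp e]; exact Sym2.mem_iff
  set T : Finset V :=
    (Finset.univ.image fun e => (p e).1) ∪ (Finset.univ.image fun e => (p e).2) with hT
  have hT1 : ∀ e, (p e).1 ∈ T := fun e =>
    Finset.mem_union_left _ (Finset.mem_image_of_mem _ (Finset.mem_univ e))
  have hT2 : ∀ e, (p e).2 ∈ T := fun e =>
    Finset.mem_union_right _ (Finset.mem_image_of_mem _ (Finset.mem_univ e))
  set incident : V → Finset E := fun v => Finset.univ.filter (fun e => v ∈ G.ends e)
    with hinc
  -- double counting
  have hcount : ∀ (q : ℕ → Prop) (_ : DecidablePred q),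
      ∑ v ∈ T, ((incident v).filter (fun e => q (c e))).card
        = 2 * (Finset.univ.filter (fun e => q (c e))).card := by
    intro q hq
    have h1 : ∀ v, ((incident v).filter (fun e => q (c e))).card
        = ∑ e ∈ Finset.univ, if v ∈ G.ends e ∧ q (c e) then 1 else 0 := by
      intro v
      rw [hinc, Finset.filter_filter, Finset.card_filter]
    have h2 : ∀ e, (∑ v ∈ T, if v ∈ G.ends e ∧ q (c e) then 1 else 0)
        = if q (c e) then 2 else 0 := by
      intro e
      by_cases hqe : q (c e)
      · simp only [hqe, and_true, if_true]
        rw [Finset.sum_boole]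
        have : T.filter (fun v => v ∈ G.ends e) = {(p e).1, (p e).2} := by
          ext v
          simp only [Finset.mem_filter, Finset.mem_insert, Finset.mem_singleton, hmem e]
          constructor
          · rintro ⟨-, h⟩; exact h
          · rintro (rfl | rfl)
            · exact ⟨hT1 e, Or.inl rfl⟩
            · exact ⟨hT2 e, Or.inr rfl⟩
        rw [this]
        rw [Finset.card_insert_of_notMem (by simpa using hne e), Finset.card_singleton]
        norm_num
      · simp [hqe]
    calc ∑ v ∈ T, ((incident v).filter (fun e => q (c e))).card
        = ∑ v ∈ T, ∑ e ∈ Finset.univ, (if v ∈ G.ends e ∧ q (c e) then 1 else 0) := by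
          exact Finset.sum_congr rfl fun v _ => h1 v
      _ = ∑ e ∈ Finset.univ, ∑ v ∈ T, (if v ∈ G.ends e ∧ q (c e) then 1 else 0) :=
          Finset.sum_comm
      _ = ∑ e ∈ Finset.univ, (if q (c e) then 2 else 0) :=
          Finset.sum_congr rfl fun e _ => h2 e
      _ = 2 * (Finset.univ.filter (fun e => q (c e))).card := by
          rw [Finset.sum_ite, Finset.sum_const, Finset.sum_const_zero, add_zero,
            smul_eq_mul, mul_comm]
  -- per-vertex equality of odd and even color counts
  have key : ∀ v, ((incident v).filter (fun e => Odd (c e))).card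
      = ((incident v).filter (fun e => ¬ Odd (c e))).card := by
    intro v
    obtain ⟨a, b, hab⟩ := hint v
    rw [Multigraph.colorSet] at hab
    have hinj : Set.InjOn c (incident v) := by
      intro e he f hf hcef
      by_contra hnef
      exact hprop e f hnef v (Finset.mem_filter.mp he).2 (Finset.mem_filter.mp hf).2 hcef
    have himg : ∀ (q : ℕ → Prop) (_ : DecidablePred q),
        ((incident v).filter (fun e => q (c e))).card
          = ((Finset.Icc a b).filter (fun x => q x)).card := by
      intro q hq
      rw [← hab, Finset.filter_image,
        Finset.card_image_of_injOn (hinj.mono (by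
          intro e he
          exact Finset.mem_coe.mpr (Finset.mem_of_mem_filter e he)))]
    have hcard : (Finset.Icc a b).card = G.degree v := by
      rw [← hab, Finset.card_image_of_injOn hinj]; rfl
    exact (himg (fun x => Odd x) inferInstance).trans
      ((oddeven a b (hcard ▸ heven v)).trans
        (himg (fun x => ¬ Odd x) inferInstance).symm)
  have h1 := hcount (fun x => Odd x) inferInstance
  have h2 := hcount (fun x => ¬ Odd x) inferInstance
  have h3 : ∑ v ∈ T, ((incident v).filter (fun e => Odd (c e))).card
      = ∑ v ∈ T, ((incident v).filter (fun e => ¬ Odd (c e))).card :=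
    Finset.sum_congr rfl fun v _ => key v
  have h4 := Finset.card_filter_add_card_filter_not
    (s := (Finset.univ : Finset E)) (p := fun e => Odd (c e))
  rw [Finset.card_univ] at h4
  rw [Nat.odd_iff] at hodd
  omega
end

section
/- An r-regular multigraph with an odd number of edges, where r is even and the multigraph is connected, has chromatic index strictly greater than r. -/
open scoped Classical

/-- a connected `r`-regular multigraph with `r` even and an odd number of
edges has chromatic index strictly greater than `r`. -/
theorem stmt17 {V E : Type} [Fintype E] (G : Multigraph V E) (r : ℕ) (hr : Even r)
    (hconn : G.Connected) (hreg : ∀ v : V, G.degree v = r)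
    (hodd : Odd (Fintype.card E)) :
    r < G.chromIndex := by
  classical
  by_contra hlt
  push_neg at hlt
  -- E is nonempty
  have hEpos : 0 < Fintype.card E := hodd.pos
  obtain ⟨e0⟩ := Fintype.card_pos_iff.mp hEpos
  -- endpoints of each edge
  have hends : ∀ e : E, ∃ x y : V, G.ends e = s(x, y) := by
    intro e
    obtain ⟨⟨x, y⟩, h⟩ := Quot.exists_rep (G.ends e)
    exact ⟨x, y, h.symm⟩
  choose ea eb hab using hends
  have hne : ∀ e : E, ea e ≠ eb e := by
    intro e
    have := G.not_isDiag e
    rw [hab e, Sym2.mk_isDiag_iff] at this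
    exact this
  -- r ≥ 1
  have hr1 : 1 ≤ r := by
    have h1 : ea e0 ∈ G.ends e0 := by rw [hab e0]; exact Sym2.mem_mk_left _ _
    have : 0 < G.degree (ea e0) := by
      rw [Multigraph.degree]
      exact Finset.card_pos.mpr ⟨e0, Finset.mem_filter.mpr ⟨Finset.mem_univ _, h1⟩⟩
    rw [hreg] at this
    exact this
  -- V is finite
  have hfinV : Finite V := by
    rw [← Set.finite_univ_iff]
    have hsub : (Set.univ : Set V) ⊆ ⋃ e : E, ({ea e, eb e} : Set V) := by
      intro v _
      have hd : 0 < G.degree v := by rw [hreg v]; exact hr1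
      rw [Multigraph.degree] at hd
      obtain ⟨e, he⟩ := Finset.card_pos.mp hd
      have hv : v ∈ G.ends e := (Finset.mem_filter.mp he).2
      rw [hab e, Sym2.mem_iff] at hv
      exact Set.mem_iUnion.mpr ⟨e, by rcases hv with h | h <;> simp [h]⟩
    exact Set.Finite.subset (Set.finite_iUnion fun e => (Set.finite_singleton _).insert _) hsub
  haveI : Fintype V := Fintype.ofFinite V
  -- the set defining chromIndex is nonempty
  set S := {n | ∃ c : E → ℕ, G.Proper c ∧ ∀ e, c e ∈ Finset.Icc 1 n} with hS
  have hSne : S.Nonempty := by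
    refine ⟨Fintype.card E, fun e => ((Fintype.equivFin E) e).val + 1, ?_, ?_⟩
    · intro e f hef v _ _ h
      simp only [add_left_inj, Fin.val_inj, EmbeddingLike.apply_eq_iff_eq] at h
      exact hef h
    · intro e
      simp only [Finset.mem_Icc]
      exact ⟨Nat.le_add_left _ _, Nat.succ_le_of_lt ((Fintype.equivFin E) e).isLt⟩
  have hmem : G.chromIndex ∈ S := Nat.sInf_mem hSne
  obtain ⟨c, hp, hc⟩ := hmem
  have hc' : ∀ e, c e ∈ Finset.Icc 1 r := by
    intro e
    exact Finset.Icc_subset_Icc_right hlt (hc e)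
  -- edges at a vertex
  set A : V → Finset E := fun v => Finset.univ.filter (fun e => v ∈ G.ends e) with hA
  have hcardA : ∀ v, (A v).card = r := fun v => hreg v
  have hinj : ∀ v, Set.InjOn c (A v) := by
    intro v e he f hf hef
    by_contra h
    exact hp e f h v (Finset.mem_filter.mp he).2 (Finset.mem_filter.mp hf).2 hef
  have himg : ∀ v : V, (A v).image c = Finset.Icc 1 r := by
    intro v
    apply Finset.eq_of_subset_of_card_le
    · intro i hi
      obtain ⟨e, _, rfl⟩ := Finset.mem_image.mp hi
      exact hc' e
    · rw [Finset.card_image_of_injOn (hinj v), hcardA, Nat.card_Icc]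
      omega
  have huniq : ∀ (v : V), ∀ i ∈ Finset.Icc 1 r,
      ((A v).filter (fun e => c e = i)).card = 1 := by
    intro v i hi
    rw [← himg v] at hi
    obtain ⟨e, he, hce⟩ := Finset.mem_image.mp hi
    rw [Finset.card_eq_one]
    refine ⟨e, ?_⟩
    ext f
    simp only [Finset.mem_filter, Finset.mem_singleton]
    constructor
    · rintro ⟨hf, hcf⟩
      exact hinj v hf he (hcf.trans hce.symm)
    · rintro rfl
      exact ⟨he, hce⟩
  -- each edge has exactly two endpoints
  have hpair : ∀ e : E, (Finset.univ.filter (fun v => v ∈ G.ends e)).card = 2 := by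
    intro e
    have : Finset.univ.filter (fun v => v ∈ G.ends e) = {ea e, eb e} := by
      ext v
      simp only [Finset.mem_filter, Finset.mem_univ, true_and, Finset.mem_insert,
        Finset.mem_singleton, hab e, Sym2.mem_iff]
    rw [this, Finset.card_pair (hne e)]
  -- counting: each color class has card V / 2 edges
  have hcount : ∀ i ∈ Finset.Icc 1 r,
      2 * (Finset.univ.filter (fun e => c e = i)).card = Fintype.card V := by
    intro i hi
    have key : ∑ v : V, ∑ e : E, (if v ∈ G.ends e ∧ c e = i then 1 else 0)
        = ∑ e : E, ∑ v : V, (if v ∈ G.ends e ∧ c e = i then 1 else 0) :=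
      Finset.sum_comm
    have lhs : ∑ v : V, ∑ e : E, (if v ∈ G.ends e ∧ c e = i then 1 else 0)
        = Fintype.card V := by
      have hone : ∀ v : V, (∑ e : E, if v ∈ G.ends e ∧ c e = i then 1 else 0) = 1 := by
        intro v
        have h1 : (Finset.univ.filter (fun e => v ∈ G.ends e ∧ c e = i))
            = (A v).filter (fun e => c e = i) := by
          rw [hA, Finset.filter_filter]
        calc ∑ e : E, (if v ∈ G.ends e ∧ c e = i then 1 else 0)
            = (Finset.univ.filter (fun e => v ∈ G.ends e ∧ c e = i)).card := by
              rw [Finset.card_filter]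
          _ = 1 := by rw [h1]; exact huniq v i hi
      rw [Finset.sum_congr rfl fun v _ => hone v, Finset.sum_const, smul_eq_mul, mul_one,
        Finset.card_univ]
    have rhs : ∑ e : E, ∑ v : V, (if v ∈ G.ends e ∧ c e = i then 1 else 0)
        = 2 * (Finset.univ.filter (fun e => c e = i)).card := by
      have h2 : ∀ e : E, ∑ v : V, (if v ∈ G.ends e ∧ c e = i then 1 else 0)
          = if c e = i then 2 else 0 := by
        intro e
        by_cases hce : c e = i
        · simp only [hce, and_true, if_true]
          rw [← Finset.card_filter]
          exact hpair e
        · simp [hce]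
      rw [Finset.sum_congr rfl fun e _ => h2 e, Finset.sum_ite,
        Finset.sum_const, Finset.sum_const_zero, add_zero, smul_eq_mul, mul_comm]
    rw [← rhs, ← key, lhs]
  -- finish: |E| = r * m is even
  set m := (Finset.univ.filter (fun e => c e = 1)).card with hm
  have h1r : (1 : ℕ) ∈ Finset.Icc 1 r := Finset.mem_Icc.mpr ⟨le_refl 1, hr1⟩
  have hEcard : Fintype.card E = ∑ i ∈ Finset.Icc 1 r,
      (Finset.univ.filter (fun e => c e = i)).card := by
    rw [Fintype.card]
    exact Finset.card_eq_sum_card_fiberwise fun e _ => hc' e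
  have hall : ∀ i ∈ Finset.Icc 1 r,
      (Finset.univ.filter (fun e => c e = i)).card = m := by
    intro i hi
    have := hcount i hi
    have h1 := hcount 1 h1r
    omega
  have : Fintype.card E = r * m := by
    rw [hEcard, Finset.sum_congr rfl hall, Finset.sum_const, smul_eq_mul, Nat.card_Icc,
      Nat.add_sub_cancel]
  exact (Nat.not_even_iff_odd.mpr hodd) (this ▸ hr.mul_right m)
end
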